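/- With the notation of the context, if 0 < ((λ₁+λ₂)/(1+λ₁λ₂))·β < α < β, then Φ(1) ∈ (π, 2π). (This is case '+1' of Lemma 2.8: for lifts A, B of τ_{∞,0}(λ₁), τ_{α,β}(λ₂) to the m-fold covering group of PSL(2,ℝ), lev_m(A·B) − lev_m(A) − lev_m(B) = +1.) -/

import Mathlib

/-!
`w(0) = 2`, `Im w(t) > 0` for `t > 0`, and `Re w(1) < 0` precisely because
`(λ₁ + λ₂) β < (1 + λ₁ λ₂) α`. Since `exp (iΦ) = (w / |w|)²`, the
continuous function `|w| · exp (iΦ/2)` is a square root of `w²` on `[0, 1]` agreeing with `w` at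
`0`, hence equals `w`: so `Φ/2` is a continuous argument of `w`. It starts at `0` and has positive
sine for `t > 0`, so `Φ(1)/2 ∈ (0, π)`, and `cos (Φ(1)/2) < 0` puts it in `(π/2, π)`.
-/

/-- `λ(t) = 1 + t(λ−1)`, deforming the shift parameter from `1` to `λ`. -/
noncomputable def lamt (l t : ℝ) : ℝ := 1 + t * (l - 1)

/-- The hyperbolic element `τ_{∞,0}(λ₁(t))` of `SL(2,ℝ)` as a matrix. -/
noncomputable def matA (l1 t : ℝ) : Matrix (Fin 2) (Fin 2) ℝ :=
  !![Real.sqrt (lamt l1 t), 0; 0, (Real.sqrt (lamt l1 t))⁻¹]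

/-- The hyperbolic element `τ_{α,β}(λ₂(t))` of `SL(2,ℝ)` with fixed points `α`, `β`. -/
noncomputable def matB (l2 α β t : ℝ) : Matrix (Fin 2) (Fin 2) ℝ :=
  ((α - β) * Real.sqrt (lamt l2 t))⁻¹ •
    !![lamt l2 t * α - β, -((lamt l2 t - 1) * α * β);
       lamt l2 t - 1, α - lamt l2 t * β]

/-- The product path `M(t) = A(t)·B(t)`. -/
noncomputable def matM (l1 l2 α β t : ℝ) : Matrix (Fin 2) (Fin 2) ℝ :=
  matA l1 t * matB l2 α β t

/-- `w(t) = (a(t)+d(t)) + i(b(t)−c(t))`. -/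
noncomputable def wfun (l1 l2 α β t : ℝ) : ℂ :=
  ((matM l1 l2 α β t 0 0 + matM l1 l2 α β t 1 1 : ℝ) : ℂ) +
    Complex.I * ((matM l1 l2 α β t 0 1 - matM l1 l2 α β t 1 0 : ℝ) : ℂ)

open Set

section HalfAngle

open Complex

theorem norm_mul_exp_half_eqOn {X : Type*} [TopologicalSpace X] {S : Set X} {w : X → ℂ}
    {φ : X → ℝ} (hS : IsPreconnected S) (hw : ContinuousOn w S) (hw0 : ∀ x ∈ S, w x ≠ 0)
    (hφ : ContinuousOn φ S) (hφw : ∀ x ∈ S, exp (I * φ x) = (w x / ‖w x‖) ^ 2)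
    {x₀ : X} (hx₀ : x₀ ∈ S) (hφx₀ : ‖w x₀‖ * exp ((φ x₀ / 2 : ℝ) * I) = w x₀) :
    EqOn (fun x ↦ ‖w x‖ * exp ((φ x / 2 : ℝ) * I)) w S := by
  refine hS.eq_of_sq_eq (by fun_prop) hw (fun x hx ↦ ?_) (hw0 _) hx₀ hφx₀
  have hn : (‖w x‖ : ℂ) ≠ 0 := by exact_mod_cast norm_ne_zero_iff.2 (hw0 x hx)
  have hexp : exp ((φ x / 2 : ℝ) * I) ^ 2 = exp (I * φ x) := by
    rw [← exp_nat_mul]; push_cast; ring_nf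
  simp only [Pi.pow_apply, mul_pow, hexp, hφw x hx, div_pow]
  field_simp

variable {θ : ℝ} {z : ℂ}

theorem sin_eq_im_div_norm (h : ‖z‖ * exp (θ * I) = z) (hz : z ≠ 0) :
    Real.sin θ = z.im / ‖z‖ := by
  rw [eq_div_iff (norm_ne_zero_iff.2 hz), mul_comm]
  conv_rhs => rw [← h]
  rw [im_ofReal_mul, exp_ofReal_mul_I_im]

theorem cos_eq_re_div_norm (h : ‖z‖ * exp (θ * I) = z) (hz : z ≠ 0) :
    Real.cos θ = z.re / ‖z‖ := by
  rw [eq_div_iff (norm_ne_zero_iff.2 hz), mul_comm]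
  conv_rhs => rw [← h]
  rw [re_ofReal_mul, exp_ofReal_mul_I_re]

end HalfAngle

open Real in
theorem mem_Ioo_zero_pi_of_sin_pos {θ : ℝ → ℝ} {a b : ℝ} (hab : a < b)
    (hθ : ContinuousOn θ (Icc a b)) (hθa : θ a = 0) (hsin : ∀ t ∈ Ioc a b, 0 < sin (θ t)) :
    θ b ∈ Ioo 0 π := by
  have hne : ∀ t ∈ Icc a b, θ t ≠ π ∧ θ t ≠ -π := by
    intro t ht
    rcases ht.1.eq_or_lt with rfl | hat
    · simp [hθa, pi_ne_zero, pi_ne_zero.symm]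
    · have := hsin t ⟨hat, ht.2⟩
      constructor <;> rintro h <;> simp [h] at this
  have hlt : θ b < π := by
    by_contra! h
    obtain ⟨t, ht, hπ⟩ := intermediate_value_Icc hab.le hθ ⟨hθa ▸ pi_pos.le, h⟩
    exact (hne t ht).1 hπ
  have hgt : -π < θ b := by
    by_contra! h
    obtain ⟨t, ht, hπ⟩ := intermediate_value_Icc' hab.le hθ ⟨h, hθa ▸ neg_nonpos.2 pi_pos.le⟩
    exact (hne t ht).2 hπ
  refine ⟨?_, hlt⟩
  by_contra! h
  exact (hsin b ⟨hab, le_rfl⟩).not_ge (sin_nonpos_of_nonpos_of_neg_pi_le h hgt.le)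

section Path

variable {l l1 l2 α β t : ℝ}

@[simp] theorem lamt_zero (l : ℝ) : lamt l 0 = 1 := by simp [lamt]

@[simp] theorem lamt_one (l : ℝ) : lamt l 1 = l := by simp [lamt]

theorem lamt_pos (hl : 0 < l) (ht : t ∈ Icc 0 1) : 0 < lamt l t := by
  unfold lamt
  rcases ht.2.lt_or_eq with h | rfl
  · nlinarith [ht.1]
  · linarith

theorem one_lt_lamt (hl : 1 < l) (ht : 0 < t) : 1 < lamt l t := by
  unfold lamt; nlinarith

variable (l1 l2 α β t)

theorem matM_trace : matM l1 l2 α β t 0 0 + matM l1 l2 α β t 1 1 =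
    ((α - β) * √(lamt l2 t))⁻¹ *
      (√(lamt l1 t) * (lamt l2 t * α - β) + (√(lamt l1 t))⁻¹ * (α - lamt l2 t * β)) := by
  simp [matM, matA, matB, Matrix.mul_apply, Fin.sum_univ_two]
  ring

theorem matM_antidiag : matM l1 l2 α β t 0 1 - matM l1 l2 α β t 1 0 =
    -((α - β) * √(lamt l2 t))⁻¹ *
      ((lamt l2 t - 1) * (√(lamt l1 t) * (α * β) + (√(lamt l1 t))⁻¹)) := by
  simp [matM, matA, matB, Matrix.mul_apply, Fin.sum_univ_two]
  ring

theorem wfun_re : (wfun l1 l2 α β t).re = matM l1 l2 α β t 0 0 + matM l1 l2 α β t 1 1 := by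
  simp [wfun]

theorem wfun_im : (wfun l1 l2 α β t).im = matM l1 l2 α β t 0 1 - matM l1 l2 α β t 1 0 := by
  simp [wfun]

variable {l1 l2 α β t}

theorem wfun_zero (hαβ : α ≠ β) : wfun l1 l2 α β 0 = 2 := by
  apply Complex.ext
  · rw [wfun_re, matM_trace]; field_simp [sub_ne_zero.2 hαβ]; norm_num; ring
  · simp [wfun_im, matM_antidiag]

theorem continuousOn_wfun (hl1 : 0 < l1) (hl2 : 0 < l2) (hαβ : α ≠ β) :
    ContinuousOn (wfun l1 l2 α β) (Icc 0 1) := by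
  have h1 : ∀ t ∈ Icc (0 : ℝ) 1, √(lamt l1 t) ≠ 0 := fun t ht ↦
    (Real.sqrt_pos.2 (lamt_pos hl1 ht)).ne'
  have h2 : ∀ t ∈ Icc (0 : ℝ) 1, (α - β) * √(lamt l2 t) ≠ 0 := fun t ht ↦
    mul_ne_zero (sub_ne_zero.2 hαβ) (Real.sqrt_pos.2 (lamt_pos hl2 ht)).ne'
  rw [show wfun l1 l2 α β = fun t ↦
      ((wfun l1 l2 α β t).re : ℂ) + (wfun l1 l2 α β t).im * Complex.I
    from funext fun t ↦ (Complex.re_add_im _).symm]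
  simp only [wfun_re, wfun_im, matM_trace, matM_antidiag]
  unfold lamt at *
  fun_prop (disch := assumption)

theorem wfun_im_pos (hl1 : 0 < l1) (hl2 : 1 < l2) (hαβ : α < β) (hprod : 0 < α * β)
    (ht : t ∈ Ioc 0 1) : 0 < (wfun l1 l2 α β t).im := by
  have hs : 0 < √(lamt l1 t) := Real.sqrt_pos.2 (lamt_pos hl1 (Ioc_subset_Icc_self ht))
  have hr : 0 < √(lamt l2 t) :=
    Real.sqrt_pos.2 (lamt_pos (by linarith) (Ioc_subset_Icc_self ht))
  rw [wfun_im, matM_antidiag]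
  exact mul_pos (neg_pos.2 (inv_lt_zero.2 (mul_neg_of_neg_of_pos (sub_neg.2 hαβ) hr)))
    (mul_pos (sub_pos.2 (one_lt_lamt hl2 ht.1)) (add_pos (mul_pos hs hprod) (inv_pos.2 hs)))

theorem wfun_one_re_neg (hl1 : 0 < l1) (hl2 : 0 < l2) (hαβ : α < β)
    (h : (l1 + l2) * β < α * (1 + l1 * l2)) : (wfun l1 l2 α β 1).re < 0 := by
  have hs : 0 < √l1 := Real.sqrt_pos.2 hl1
  have hnum : √l1 * (l2 * α - β) + (√l1)⁻¹ * (α - l2 * β) =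
      (α * (1 + l1 * l2) - (l1 + l2) * β) / √l1 := by
    field_simp
    rw [Real.sq_sqrt hl1.le]
    ring
  rw [wfun_re, matM_trace, lamt_one, lamt_one, hnum]
  exact mul_neg_of_neg_of_pos
    (inv_lt_zero.2 (mul_neg_of_neg_of_pos (sub_neg.2 hαβ) (Real.sqrt_pos.2 hl2)))
    (div_pos (sub_pos.2 h) hs)

theorem wfun_ne_zero (hl1 : 0 < l1) (hl2 : 1 < l2) (hαβ : α < β) (hprod : 0 < α * β)
    (ht : t ∈ Icc 0 1) : wfun l1 l2 α β t ≠ 0 := by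
  rcases ht.1.eq_or_lt with rfl | ht0
  · simp [wfun_zero hαβ.ne]
  · intro h
    have him := wfun_im_pos hl1 hl2 hαβ hprod ⟨ht0, ht.2⟩
    rw [h, Complex.zero_im] at him
    exact him.false

end Path

theorem lemma28_case_plus_one_general (l1 l2 α β : ℝ) (hl1 : 1 < l1) (hl2 : 1 < l2)
    (Φ : ℝ → ℝ) (hΦc : ContinuousOn Φ (Set.Icc 0 1)) (hΦ0 : Φ 0 = 0)
    (hΦ : ∀ t ∈ Set.Icc (0 : ℝ) 1,
      Complex.exp (Complex.I * (Φ t : ℂ))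
        = (wfun l1 l2 α β t / (‖wfun l1 l2 α β t‖ : ℂ)) ^ 2)
    (hcase : 0 < (l1 + l2) / (1 + l1 * l2) * β ∧
      (l1 + l2) / (1 + l1 * l2) * β < α ∧ α < β) :
    Φ 1 ∈ Set.Ioo Real.pi (2 * Real.pi) := by
  obtain ⟨hκβ, hκα, hαβ⟩ := hcase
  have hl1₀ : 0 < l1 := by linarith
  have hl2₀ : 0 < l2 := by linarith
  have hden : 0 < 1 + l1 * l2 := by positivity
  have hprod : 0 < α * β :=
    mul_pos (hκβ.trans hκα) (pos_of_mul_pos_right hκβ (div_pos (by linarith) hden).le)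
  have hkey : (l1 + l2) * β < α * (1 + l1 * l2) := by
    rwa [div_mul_eq_mul_div, div_lt_iff₀ hden] at hκα
  have hwne : ∀ t ∈ Icc (0 : ℝ) 1, wfun l1 l2 α β t ≠ 0 := fun t ↦
    wfun_ne_zero hl1₀ hl2 hαβ hprod
  have hpolar := norm_mul_exp_half_eqOn isPreconnected_Icc
    (continuousOn_wfun hl1₀ hl2₀ hαβ.ne) hwne hΦc hΦ
    (left_mem_Icc.2 zero_le_one) (by simp [hΦ0, wfun_zero hαβ.ne])
  have hsin : ∀ t ∈ Ioc (0 : ℝ) 1, 0 < Real.sin (Φ t / 2) := fun t ht ↦ by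
    have ht' := Ioc_subset_Icc_self ht
    rw [sin_eq_im_div_norm (hpolar ht') (hwne t ht')]
    exact div_pos (wfun_im_pos hl1₀ hl2 hαβ hprod ht) (norm_pos_iff.2 (hwne t ht'))
  have hcos : Real.cos (Φ 1 / 2) < 0 := by
    have h1 : (1 : ℝ) ∈ Icc 0 1 := right_mem_Icc.2 zero_le_one
    rw [cos_eq_re_div_norm (hpolar h1) (hwne 1 h1)]
    exact div_neg_of_neg_of_pos (wfun_one_re_neg hl1₀ hl2₀ hαβ hkey)
      (norm_pos_iff.2 (hwne 1 h1))
  obtain ⟨hpos, hlt⟩ := mem_Ioo_zero_pi_of_sin_pos zero_lt_one (hΦc.div_const 2)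
    (by simp [hΦ0]) hsin
  have hhalf : Real.pi / 2 < Φ 1 / 2 := by
    by_contra! h
    exact hcos.not_ge (Real.cos_nonneg_of_mem_Icc ⟨by linarith [Real.pi_pos], h⟩)
  constructor <;> linarith

theorem lemma28_case_plus_one (l1 l2 α β : ℝ) (hl1 : 1 < l1) (hl2 : 1 < l2)
    (hα : α ≠ 0) (hβ : β ≠ 0) (hαβ : α ≠ β)
    (Φ : ℝ → ℝ) (hΦc : ContinuousOn Φ (Set.Icc 0 1)) (hΦ0 : Φ 0 = 0)
    (hΦ : ∀ t ∈ Set.Icc (0 : ℝ) 1,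
      Complex.exp (Complex.I * (Φ t : ℂ))
        = (wfun l1 l2 α β t / (‖wfun l1 l2 α β t‖ : ℂ)) ^ 2)
    (hcase : 0 < (l1 + l2) / (1 + l1 * l2) * β ∧
      (l1 + l2) / (1 + l1 * l2) * β < α ∧ α < β) :
    Φ 1 ∈ Set.Ioo Real.pi (2 * Real.pi) :=
  lemma28_case_plus_one_general l1 l2 α β hl1 hl2 Φ hΦc hΦ0 hΦ hcase
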